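/- arXiv:1911.07745 — 3 statements merged into one kernel-verified Lean document; each statement's English description precedes it below -/
import Mathlib

section
/- Let G be a σ-finite abelian group with exhausting sequence (G_n)_{n≥0} such that |G_{n+1}|/|G_n| → ∞ as n → ∞. Let A = ⋃_{n≥1} (G_{2n} \ G_{2n−1}) and B = ⋃_{n≥0} (G_{2n+1} \ G_{2n}). Then d_up(A) = 1, d_up(B) = 1, and d_up(A+B) = 1; in particular d_up(A+B) < d_up(A) + d_up(B). -/
/-!
The sets `A` and `B` are unions of alternate layers `G_{n+1} \ G_n`. Since
`|G_n| / |G_{n+1}| → 0`, a single layer fills almost all of `G_{n+1}`, so every set containing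
infinitely many layers has upper density `1`. The sumset `A + B` contains `A + b` for any
`b ∈ B`, and once `b ∈ G_n` the translate `A + b` meets `G_n` in as many points as `A` does.
-/

open Filter Pointwise

/-- Upper asymptotic density of `A` relative to the exhausting sequence `Gn`. -/
noncomputable def dUpp {G : Type*} [AddCommGroup G] (Gn : ℕ → AddSubgroup G) (A : Set G) : ℝ :=
  limsup (fun n => (Nat.card ↥(A ∩ (Gn n : Set G)) : ℝ) / (Nat.card ↥(Gn n) : ℝ)) atTop

open Topology

theorem Filter.limsup_eq_of_forall_le_of_tendsto_comp {α β : Type*} {l : Filter α}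
    {l' : Filter β} [l'.NeBot] {f : α → ℝ} {c : ℝ} {φ : β → α} (hle : ∀ x, f x ≤ c)
    (hφ : Tendsto φ l' l) (hf : Tendsto (f ∘ φ) l' (𝓝 c)) : limsup f l = c := by
  have hfreq : ∀ a < c, ∃ᶠ x in l, a ≤ f x := fun a ha =>
    hφ.frequently (hf.eventually (eventually_ge_nhds ha)).frequently
  refine le_antisymm (limsup_le_of_le ?_ (Eventually.of_forall hle)) ?_
  · exact IsCoboundedUnder.of_frequently_ge (hfreq (c - 1) (sub_one_lt c))
  · exact le_of_forall_lt_imp_le_of_dense fun a ha =>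
      le_limsup_of_frequently_le (hfreq a ha) (isBoundedUnder_of ⟨c, hle⟩)

theorem Set.one_sub_ncard_div_ncard_le {α : Type*} {s t S : Set α} (hst : s ⊆ t)
    (ht : t.Finite) (hne : t.Nonempty) (h : (t \ s).ncard ≤ (S ∩ t).ncard) :
    1 - (s.ncard : ℝ) / t.ncard ≤ (S ∩ t).ncard / t.ncard := by
  have ht0 : (0 : ℝ) < t.ncard := by exact_mod_cast (Set.ncard_pos ht).2 hne
  have hsplit : ((t \ s).ncard : ℝ) + s.ncard = t.ncard := by
    exact_mod_cast Set.ncard_sdiff_add_ncard_of_subset hst ht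
  rw [one_sub_div ht0.ne', ← hsplit, add_sub_cancel_right]
  gcongr

section Layers

variable {G : Type*} [AddCommGroup G]

theorem AddSubgroup.natCard_eq_ncard (H : AddSubgroup G) : Nat.card H = (H : Set G).ncard :=
  Nat.card_coe_set_eq (H : Set G)

theorem AddSubgroup.ncard_inter_le_ncard_add_inter (K : AddSubgroup G) (hK : (K : Set G).Finite)
    (A : Set G) {B : Set G} {b : G} (hb : b ∈ B) (hbK : b ∈ K) :
    (A ∩ K).ncard ≤ ((A + B) ∩ K).ncard := by
  rw [← Set.ncard_image_of_injective (A ∩ K) (add_left_injective b)]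
  refine Set.ncard_le_ncard ?_ (hK.subset Set.inter_subset_right)
  rintro _ ⟨x, ⟨hxA, hxK⟩, rfl⟩
  exact ⟨Set.add_mem_add hxA hb, K.add_mem hxK hbK⟩

def layer (Gn : ℕ → AddSubgroup G) (n : ℕ) : Set G := (Gn (n + 1) : Set G) \ Gn n

variable {Gn : ℕ → AddSubgroup G}

theorem eventually_layer_nonempty (hfin : ∀ n, (Gn n : Set G).Finite)
    (hratio : Tendsto (fun n => (Nat.card ↥(Gn (n + 1)) : ℝ) / (Nat.card ↥(Gn n) : ℝ))
      atTop atTop) :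
    ∀ᶠ n in atTop, (layer Gn n).Nonempty := by
  filter_upwards [hratio.eventually_gt_atTop 1] with n hn
  have hlt : Nat.card (Gn n) < Nat.card (Gn (n + 1)) := by
    by_contra! hle
    exact hn.not_ge (div_le_one_of_le₀ (by exact_mod_cast hle) (Nat.cast_nonneg _))
  rw [AddSubgroup.natCard_eq_ncard, AddSubgroup.natCard_eq_ncard] at hlt
  obtain ⟨x, hx, hxn⟩ := Set.exists_mem_notMem_of_ncard_lt_ncard hlt (hfin n)
  exact ⟨x, hx, hxn⟩

theorem dUpp_eq_one_of_ncard_layer_le (hmono : Monotone Gn)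
    (hfin : ∀ n, (Gn n : Set G).Finite)
    (hratio : Tendsto (fun n => (Nat.card ↥(Gn (n + 1)) : ℝ) / (Nat.card ↥(Gn n) : ℝ))
      atTop atTop)
    {S : Set G} {p : ℕ → ℕ} (hp : Tendsto p atTop atTop)
    (hcard : ∀ᶠ n in atTop, (layer Gn (p n)).ncard ≤ (S ∩ Gn (p n + 1)).ncard) :
    dUpp Gn S = 1 := by
  simp only [dUpp, Nat.card_coe_set_eq, AddSubgroup.natCard_eq_ncard]
  have hle : ∀ n, ((S ∩ Gn n).ncard : ℝ) / (Gn n : Set G).ncard ≤ 1 := fun n =>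
    div_le_one_of_le₀ (by exact_mod_cast Set.ncard_le_ncard Set.inter_subset_right (hfin n))
      (Nat.cast_nonneg _)
  have hsmall : Tendsto (fun n => ((Gn (p n) : Set G).ncard : ℝ) / (Gn (p n + 1) : Set G).ncard)
      atTop (𝓝 0) := by
    simpa only [AddSubgroup.natCard_eq_ncard, Function.comp_def, Pi.inv_def, inv_div]
      using (hratio.comp hp).inv_tendsto_atTop
  refine Filter.limsup_eq_of_forall_le_of_tendsto_comp hle (φ := fun n => p n + 1)
    (tendsto_atTop_mono (fun n => Nat.le_succ (p n)) hp) ?_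
  refine tendsto_of_tendsto_of_tendsto_of_le_of_le' (by simpa using hsmall.const_sub 1)
    tendsto_const_nhds ?_ (Eventually.of_forall fun n => hle _)
  filter_upwards [hcard] with n hn
  exact Set.one_sub_ncard_div_ncard_le (hmono (Nat.le_succ _)) (hfin _)
    ⟨0, (Gn _).zero_mem⟩ hn

theorem dUpp_eq_one_of_layer_subset (hmono : Monotone Gn)
    (hfin : ∀ n, (Gn n : Set G).Finite)
    (hratio : Tendsto (fun n => (Nat.card ↥(Gn (n + 1)) : ℝ) / (Nat.card ↥(Gn n) : ℝ))
      atTop atTop)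
    {S : Set G} {p : ℕ → ℕ} (hp : Tendsto p atTop atTop)
    (hsub : ∀ n, layer Gn (p n) ⊆ S) :
    dUpp Gn S = 1 :=
  dUpp_eq_one_of_ncard_layer_le hmono hfin hratio hp <| Eventually.of_forall fun n =>
    Set.ncard_le_ncard (Set.subset_inter (hsub n) Set.sdiff_subset)
      ((hfin _).subset Set.inter_subset_right)

end Layers

theorem layers_construction_upper_density_general {G : Type*} [AddCommGroup G]
    (Gn : ℕ → AddSubgroup G) (hmono : Monotone Gn)
    (hfin : ∀ n, (Gn n : Set G).Finite)
    (hratio : Tendsto (fun n => (Nat.card ↥(Gn (n + 1)) : ℝ) / (Nat.card ↥(Gn n) : ℝ))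
      atTop atTop)
    (A B : Set G)
    (hA : A = ⋃ n : ℕ, ((Gn (2 * (n + 1)) : Set G) \ (Gn (2 * (n + 1) - 1) : Set G)))
    (hB : B = ⋃ n : ℕ, ((Gn (2 * n + 1) : Set G) \ (Gn (2 * n) : Set G))) :
    dUpp Gn A = 1 ∧ dUpp Gn B = 1 ∧ dUpp Gn (A + B) = 1 ∧
    dUpp Gn (A + B) < dUpp Gn A + dUpp Gn B := by
  have hAlayer : ∀ n, layer Gn (2 * n + 1) ⊆ A := fun n x hx => by
    refine hA ▸ Set.mem_iUnion.2 ⟨n, ?_⟩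
    rw [show 2 * (n + 1) - 1 = 2 * n + 1 by omega, show 2 * (n + 1) = 2 * n + 1 + 1 by ring]
    exact hx
  have hBlayer : ∀ n, layer Gn (2 * n) ⊆ B := fun n =>
    hB ▸ Set.subset_iUnion_of_subset n le_rfl
  have heven : Tendsto (fun n : ℕ => 2 * n) atTop atTop :=
    tendsto_atTop_mono (fun n => Nat.le_mul_of_pos_left n two_pos) tendsto_id
  have hodd : Tendsto (fun n : ℕ => 2 * n + 1) atTop atTop :=
    tendsto_atTop_mono (fun n => Nat.le_succ _) heven
  have hdA := dUpp_eq_one_of_layer_subset hmono hfin hratio hodd hAlayer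
  have hdB := dUpp_eq_one_of_layer_subset hmono hfin hratio heven hBlayer
  obtain ⟨m, b, hb⟩ := (heven.eventually (eventually_layer_nonempty hfin hratio)).exists
  have hdAB : dUpp Gn (A + B) = 1 := by
    refine dUpp_eq_one_of_ncard_layer_le hmono hfin hratio hodd ?_
    filter_upwards [eventually_ge_atTop m] with n hn
    calc (layer Gn (2 * n + 1)).ncard ≤ (A ∩ Gn (2 * n + 1 + 1)).ncard :=
          Set.ncard_le_ncard (Set.subset_inter (hAlayer n) Set.sdiff_subset)
            ((hfin _).subset Set.inter_subset_right)
      _ ≤ ((A + B) ∩ Gn (2 * n + 1 + 1)).ncard :=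
          (Gn _).ncard_inter_le_ncard_add_inter (hfin _) A (hBlayer m hb)
            (hmono (by omega) hb.1)
  exact ⟨hdA, hdB, hdAB, by rw [hdA, hdB, hdAB]; norm_num⟩

theorem layers_construction_upper_density {G : Type*} [AddCommGroup G] [Infinite G]
    (Gn : ℕ → AddSubgroup G) (hmono : Monotone Gn)
    (hfin : ∀ n, (Gn n : Set G).Finite)
    (hexh : ∀ x : G, ∃ n, x ∈ Gn n)
    (hratio : Tendsto (fun n => (Nat.card ↥(Gn (n + 1)) : ℝ) / (Nat.card ↥(Gn n) : ℝ))
      atTop atTop)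
    (A B : Set G)
    (hA : A = ⋃ n : ℕ, ((Gn (2 * (n + 1)) : Set G) \ (Gn (2 * (n + 1) - 1) : Set G)))
    (hB : B = ⋃ n : ℕ, ((Gn (2 * n + 1) : Set G) \ (Gn (2 * n) : Set G))) :
    dUpp Gn A = 1 ∧ dUpp Gn B = 1 ∧ dUpp Gn (A + B) = 1 ∧
    dUpp Gn (A + B) < dUpp Gn A + dUpp Gn B :=
  layers_construction_upper_density_general Gn hmono hfin hratio A B hA hB
end

section
/- Let G be a σ-finite abelian group with exhausting sequence (G_n)_{n≥0}, and for each n ≥ 1 let x_n ∈ G_{n+1} \ G_n with 2x_n ∉ G_n. Let A = ⋃_{n≥1} (x_n + G_n). Then A ∩ (−A) = ∅, where −A = {−a : a ∈ A}. -/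
/-!
Write `Hₙ` for `Gn n`. If `a ∈ xₘ + Hₘ` and `-a ∈ xₙ + Hₙ` with `m ≤ n`, then everything
lives in `Hₙ` modulo `xₙ`: for `m = n` adding the two memberships gives `xₙ + xₙ ∈ Hₙ`, and
for `m < n` we have `xₘ ∈ Hₘ₊₁ ≤ Hₙ`, so `a ∈ Hₙ` and hence `xₙ ∈ Hₙ`. Both contradict the
choice of `xₙ`.
-/

open Pointwise

section Coset

variable {G : Type*} [AddCommGroup G] {H : AddSubgroup G} {x a : G}

theorem mem_singleton_add_coe_iff : a ∈ {x} + (H : Set G) ↔ -x + a ∈ H := by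
  rw [Set.singleton_add]
  exact mem_leftAddCoset_iff x

theorem add_self_mem_of_neg_add_mem_of_neg_add_neg_mem (ha : -x + a ∈ H) (hna : -x + -a ∈ H) :
    x + x ∈ H := by
  have h : x + x = -((-x + a) + (-x + -a)) := by abel
  rw [h]
  exact neg_mem (add_mem ha hna)

theorem mem_of_mem_of_neg_add_neg_mem (ha : a ∈ H) (hna : -x + -a ∈ H) : x ∈ H := by
  have h : x = -(-x + -a) - a := by abel
  rw [h]
  exact sub_mem (neg_mem hna) ha

end Coset

theorem neg_add_neg_notMem_of_neg_add_mem {G : Type*} [AddCommGroup G] {Gn : ℕ → AddSubgroup G}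
    (hmono : Monotone Gn) {x : ℕ → G} {m n : ℕ} (hxm : x m ∈ Gn (m + 1))
    (hxn : x n ∉ Gn n) (hxn2 : x n + x n ∉ Gn n) (hmn : m ≤ n) {a : G} (ha : -x m + a ∈ Gn m) :
    -x n + -a ∉ Gn n := by
  intro hna
  rcases hmn.eq_or_lt with rfl | hlt
  · exact hxn2 (add_self_mem_of_neg_add_mem_of_neg_add_neg_mem ha hna)
  · have ha' : a ∈ Gn n := by
      have h : a = x m + (-x m + a) := by abel
      rw [h]
      exact add_mem (hmono hlt hxm) (hmono hlt.le ha)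
    exact hxn (mem_of_mem_of_neg_add_neg_mem ha' hna)

theorem coset_union_disjoint_neg_general {G : Type*} [AddCommGroup G]
    (Gn : ℕ → AddSubgroup G) (hmono : Monotone Gn)
    (x : ℕ → G) (hx : ∀ n, 1 ≤ n → x n ∈ (Gn (n + 1) : Set G) \ (Gn n : Set G))
    (hx2 : ∀ n, 1 ≤ n → x n + x n ∉ Gn n)
    (A : Set G)
    (hA : A = ⋃ n ∈ Set.Ici 1, ({x n} + (Gn n : Set G))) :
    A ∩ (-A) = ∅ := by
  have hA' : ∀ a, a ∈ A ↔ ∃ n, 1 ≤ n ∧ -x n + a ∈ Gn n := by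
    simp only [hA, Set.mem_iUnion, Set.mem_Ici, mem_singleton_add_coe_iff, exists_prop,
      implies_true]
  have key : ∀ m n a, 1 ≤ m → 1 ≤ n → m ≤ n → -x m + a ∈ Gn m →
      -x n + -a ∈ Gn n → False :=
    fun m n a hm hn hmn ha hna ↦
      neg_add_neg_notMem_of_neg_add_mem hmono (hx m hm).1 (hx n hn).2 (hx2 n hn) hmn ha hna
  refine Set.eq_empty_of_forall_notMem fun a ⟨ha, hna⟩ ↦ ?_
  obtain ⟨m, hm, ha⟩ := (hA' a).1 ha
  obtain ⟨n, hn, hna⟩ := (hA' (-a)).1 hna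
  rcases le_total m n with hmn | hnm
  · exact key m n a hm hn hmn ha hna
  · exact key n m (-a) hn hm hnm hna (by rwa [neg_neg])

theorem coset_union_disjoint_neg {G : Type*} [AddCommGroup G] [Infinite G]
    (Gn : ℕ → AddSubgroup G) (hmono : Monotone Gn)
    (hfin : ∀ n, (Gn n : Set G).Finite)
    (hexh : ∀ g : G, ∃ n, g ∈ Gn n)
    (x : ℕ → G) (hx : ∀ n, 1 ≤ n → x n ∈ (Gn (n + 1) : Set G) \ (Gn n : Set G))
    (hx2 : ∀ n, 1 ≤ n → x n + x n ∉ Gn n)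
    (A : Set G)
    (hA : A = ⋃ n ∈ Set.Ici 1, ({x n} + (Gn n : Set G))) :
    A ∩ (-A) = ∅ :=
  coset_union_disjoint_neg_general Gn hmono x hx hx2 A hA
end

section
/- Let G be a σ-finite abelian group with exhausting sequence (G_n), let H ≤ G be a subgroup, and suppose there exists a positive integer k such that for all sufficiently large n the index [G_n : H ∩ G_n] divides k. Then [G : H] is finite and divides k, and moreover for all sufficiently large n one has |H ∩ G_n|/|G_n| = 1/[G : H]; in particular H has asymptotic density d(H) = 1/[G : H]. -/
open Filter

/-!
Write `π : G → G ⧸ H`. The images `π (Gn n)` form an increasing chain of finite subgroups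
exhausting `G ⧸ H`, and `|π (Gn n)| = [Gn n : H ∩ Gn n] ≤ k` eventually. Any `k + 1` points of `G ⧸ H` would lie in a
single `π (Gn n)` with `n` large, so `G ⧸ H` is finite, and then `π (Gn n) = G ⧸ H` from some
point on: the relative indices eventually equal `[G : H]`, which therefore divides `k`, and
Lagrange in `Gn n` gives `|H ∩ Gn n| / |Gn n| = 1 / [G : H]`.
-/

namespace Monotone

variable {α : Type*} {S : ℕ → Set α}

theorem eventually_finset_subset (hS : Monotone S) (hcov : ∀ a, ∃ n, a ∈ S n)
    (s : Finset α) : ∀ᶠ n in atTop, (s : Set α) ⊆ S n := by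
  have hmem (a : α) : ∀ᶠ n in atTop, a ∈ S n := by
    obtain ⟨n, hn⟩ := hcov a
    exact eventually_atTop.2 ⟨n, fun m hm => hS hm hn⟩
  exact (s.eventually_all.2 fun a _ => hmem a).mono fun _ hn a ha => hn a ha

theorem finite_of_eventually_ncard_le (hS : Monotone S) (hcov : ∀ a, ∃ n, a ∈ S n)
    (hfin : ∀ n, (S n).Finite) {k : ℕ} (hk : ∀ᶠ n in atTop, (S n).ncard ≤ k) : Finite α := by
  by_contra hinf
  have : Infinite α := not_finite_iff_infinite.1 hinf
  obtain ⟨s, hs⟩ := Infinite.exists_subset_card_eq α (k + 1)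
  obtain ⟨n, hsub, hn⟩ := ((hS.eventually_finset_subset hcov s).and hk).exists
  have := Set.ncard_le_ncard hsub (hfin n)
  rw [Set.ncard_coe_finset, hs] at this
  omega

theorem eventually_eq_univ [Finite α] (hS : Monotone S) (hcov : ∀ a, ∃ n, a ∈ S n) :
    ∀ᶠ n in atTop, S n = Set.univ := by
  cases nonempty_fintype α
  simpa [Set.univ_subset_iff] using hS.eventually_finset_subset hcov Finset.univ

end Monotone

namespace AddSubgroup

variable {G : Type*} [AddGroup G]

theorem card_inf_mul_relIndex (H K : AddSubgroup G) :
    Nat.card ↥(H ⊓ K) * H.relIndex K = Nat.card K := by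
  rw [← relIndex_bot_left, ← relIndex_bot_left, ← inf_relIndex_right H K,
    relIndex_mul_relIndex _ _ _ bot_le inf_le_right]

theorem card_inter_div_card (H K : AddSubgroup G) [Finite K] :
    (Nat.card ↥((H : Set G) ∩ K) : ℝ) / Nat.card K = 1 / H.relIndex K := by
  have hK : (Nat.card K : ℝ) ≠ 0 := Nat.cast_ne_zero.2 Nat.card_pos.ne'
  have hmul : (Nat.card ↥((H : Set G) ∩ K) : ℝ) * H.relIndex K = Nat.card K := by
    exact_mod_cast H.card_inf_mul_relIndex K
  have hrel : (H.relIndex K : ℝ) ≠ 0 := right_ne_zero_of_mul (hmul ▸ hK)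
  rw [div_eq_div_iff hK hrel, ← hmul]
  ring

theorem relIndex_eq_card_map_mk (H : AddSubgroup G) [H.Normal] (K : AddSubgroup G) :
    H.relIndex K = Nat.card (K.map (QuotientAddGroup.mk' H)) := by
  simpa using relIndex_ker (K := K) (QuotientAddGroup.mk' H)

theorem eventually_relIndex_eq_index {Gn : ℕ → AddSubgroup G} (hmono : Monotone Gn)
    (hfin : ∀ n, (Gn n : Set G).Finite) (hexh : ∀ g : G, ∃ n, g ∈ Gn n)
    (H : AddSubgroup G) [H.Normal] {k : ℕ} (hk : ∀ᶠ n in atTop, H.relIndex (Gn n) ≤ k) :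
    H.FiniteIndex ∧ ∀ᶠ n in atTop, H.relIndex (Gn n) = H.index := by
  let Q : ℕ → Set (G ⧸ H) := fun n => (Gn n).map (QuotientAddGroup.mk' H)
  have hQmono : Monotone Q := fun m n hmn => map_mono (f := QuotientAddGroup.mk' H) (hmono hmn)
  have hQcov (x : G ⧸ H) : ∃ n, x ∈ Q n := by
    induction x using QuotientAddGroup.induction_on with | H g => ?_
    obtain ⟨n, hn⟩ := hexh g
    exact ⟨n, mem_map_of_mem _ hn⟩
  have hQfin (n : ℕ) : (Q n).Finite := (hfin n).image _
  have hrel (n : ℕ) : H.relIndex (Gn n) = (Q n).ncard := relIndex_eq_card_map_mk H (Gn n)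
  have : Finite (G ⧸ H) :=
    hQmono.finite_of_eventually_ncard_le hQcov hQfin (hk.mono fun n hn => hrel n ▸ hn)
  refine ⟨finiteIndex_of_finite_quotient, (hQmono.eventually_eq_univ hQcov).mono fun n hn => ?_⟩
  rw [hrel, hn, Set.ncard_univ, index]

end AddSubgroup

theorem finite_index_of_eventually_relindex_dvd_general {G : Type*} [AddCommGroup G]
    (Gn : ℕ → AddSubgroup G) (hmono : Monotone Gn)
    (hfin : ∀ n, (Gn n : Set G).Finite)
    (hexh : ∀ g : G, ∃ n, g ∈ Gn n)
    (H : AddSubgroup G) (k : ℕ) (hk : 0 < k)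
    (hdvd : ∀ᶠ n in atTop, H.relIndex (Gn n) ∣ k) :
    H.FiniteIndex ∧ H.index ∣ k ∧
    (∀ᶠ n in atTop,
      (Nat.card ↥((H : Set G) ∩ (Gn n : Set G)) : ℝ) / (Nat.card ↥(Gn n) : ℝ)
        = 1 / (H.index : ℝ)) ∧
    Tendsto (fun n => (Nat.card ↥((H : Set G) ∩ (Gn n : Set G)) : ℝ) / (Nat.card ↥(Gn n) : ℝ))
      atTop (nhds (1 / (H.index : ℝ))) := by
  obtain ⟨hH, hrel⟩ := AddSubgroup.eventually_relIndex_eq_index hmono hfin hexh H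
    (hdvd.mono fun _ => Nat.le_of_dvd hk)
  have hdens : ∀ᶠ n in atTop,
      (Nat.card ↥((H : Set G) ∩ (Gn n : Set G)) : ℝ) / (Nat.card ↥(Gn n) : ℝ)
        = 1 / (H.index : ℝ) := hrel.mono fun n hn => by
    have := (hfin n).to_subtype
    rw [H.card_inter_div_card, hn]
  obtain ⟨n, hn, hnk⟩ := (hrel.and hdvd).exists
  exact ⟨hH, hn ▸ hnk, hdens, tendsto_const_nhds.congr' (hdens.mono fun _ h => h.symm)⟩

theorem finite_index_of_eventually_relindex_dvd {G : Type*} [AddCommGroup G] [Infinite G]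
    (Gn : ℕ → AddSubgroup G) (hmono : Monotone Gn)
    (hfin : ∀ n, (Gn n : Set G).Finite)
    (hexh : ∀ g : G, ∃ n, g ∈ Gn n)
    (H : AddSubgroup G) (k : ℕ) (hk : 0 < k)
    (hdvd : ∀ᶠ n in atTop, H.relIndex (Gn n) ∣ k) :
    H.FiniteIndex ∧ H.index ∣ k ∧
    (∀ᶠ n in atTop,
      (Nat.card ↥((H : Set G) ∩ (Gn n : Set G)) : ℝ) / (Nat.card ↥(Gn n) : ℝ)
        = 1 / (H.index : ℝ)) ∧
    Tendsto (fun n => (Nat.card ↥((H : Set G) ∩ (Gn n : Set G)) : ℝ) / (Nat.card ↥(Gn n) : ℝ))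
      atTop (nhds (1 / (H.index : ℝ))) :=
  finite_index_of_eventually_relindex_dvd_general Gn hmono hfin hexh H k hk hdvd
end
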